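/- arXiv:2504.19094 — 2 statements merged into one kernel-verified Lean document; each statement's English description precedes it below -/
import Mathlib

section
/- For every s ∈ ℕ, if H is the disjoint union of graphs H_1 and H_2, then there exists a constant C depending only on s and H such that for all n, ex(n, {K_{s,s}, H-ind}) ≤ C·(ex(n, {K_{s,s}, H_1-ind}) + ex(n, {K_{s,s}, H_2-ind}) + n). -/
open SimpleGraph

/-- A (not necessarily induced) copy of `H` in `G`: an injective map on vertices
sending edges to edges. -/
def HasCopy {V β : Type*} (G : SimpleGraph V) (H : SimpleGraph β) : Prop :=
  ∃ f : β ↪ V, ∀ a b, H.Adj a b → G.Adj (f a) (f b)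

/-- An induced copy of `H` in `G`: an injective map on vertices preserving
adjacency and non-adjacency. -/
def HasInducedCopy {V β : Type*} (G : SimpleGraph V) (H : SimpleGraph β) : Prop :=
  ∃ f : β ↪ V, ∀ a b, G.Adj (f a) (f b) ↔ H.Adj a b

/-- The number of edges of a graph on `Fin n`. -/
noncomputable def edgeCount {n : ℕ} (G : SimpleGraph (Fin n)) : ℕ := Nat.card G.edgeSet

/-- The complete bipartite graph `K_{s,s}`. -/
def Kss (s : ℕ) : SimpleGraph (Fin s ⊕ Fin s) := completeBipartiteGraph (Fin s) (Fin s)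

/-- `ex(n, H)`: the maximum number of edges of an `n`-vertex graph with no copy of `H`. -/
noncomputable def exNum {β : Type*} (n : ℕ) (H : SimpleGraph β) : ℕ :=
  sSup {m | ∃ G : SimpleGraph (Fin n), ¬ HasCopy G H ∧ edgeCount G = m}

/-- `ex(n, {K_{s,s}, H-ind})`: the maximum number of edges of an `n`-vertex graph with no
`K_{s,s}` subgraph and no induced copy of `H`. -/
noncomputable def exIndNum {β : Type*} (s n : ℕ) (H : SimpleGraph β) : ℕ :=
  sSup {m | ∃ G : SimpleGraph (Fin n),
    ¬ HasCopy G (Kss s) ∧ ¬ HasInducedCopy G H ∧ edgeCount G = m}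

/-!
Let `G` be `K_{s,s}`-free without an induced `H₁ ⊔ H₂`. Suppose `G` contained both a large
packing of induced copies of `H₁` and a large packing of induced copies of `H₂`. After discarding
the `H₁`-copies that meet the `H₂`-copies, every `H₁`-copy and every `H₂`-copy are joined by an
edge (otherwise together they form an induced `H₁ ⊔ H₂`). By pigeonhole each `H₂`-copy then has a
vertex with `s` neighbours in the union of the `H₁`-copies, and the Kővári–Sós–Turán count yields
a `K_{s,s}`. So for some `i` all packings of induced copies of `H_i` are bounded. Deleting the
vertices of a maximal packing costs `O(n)` edges and leaves a vertex set `W` that carries no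
induced `H_i`.

Padded with isolated vertices to an `n`-vertex graph, `G[W]` may still contain an induced `H_i`
that uses the padding for isolated vertices of `H_i`. In that case the vertices of the copy inside
`W`, together with the vertices of `W` that see none of them, form a bounded set dominating the
rest of `W`: the second part has no independent set of size `|H_i|`, so Ramsey and
`K_{s,s}`-freeness bound it. Deleting this set costs `O(n)` edges. After `s` rounds every remaining
vertex has `s` neighbours in a bounded set, so only boundedly many vertices remain.
-/

open Finset
open scoped Classical

section Copies

variable {V : Type*} {G : SimpleGraph V} {s : ℕ}

lemma HasCopy.mono {β : Type*} {G' : SimpleGraph V} {H : SimpleGraph β} (hle : G ≤ G')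
    (h : HasCopy G H) : HasCopy G' H :=
  let ⟨f, hf⟩ := h
  ⟨f, fun a b hab => hle (hf a b hab)⟩

lemma hasCopy_kss_of_forall_adj {S T : Finset V} (hS : #S = s) (hT : #T = s)
    (hST : Disjoint S T) (hadj : ∀ x ∈ S, ∀ y ∈ T, G.Adj x y) : HasCopy G (Kss s) := by
  obtain ⟨eS⟩ : Nonempty (Fin s ≃ S) := Fintype.card_eq.1 (by simp [hS])
  obtain ⟨eT⟩ : Nonempty (Fin s ≃ T) := Fintype.card_eq.1 (by simp [hT])
  have hinj : Function.Injective (Sum.elim (fun i => (eS i : V)) (fun i => (eT i : V))) :=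
    (Subtype.val_injective.comp eS.injective).sumElim
      (Subtype.val_injective.comp eT.injective)
      fun i j h => Finset.disjoint_left.1 hST (eS i).2 (by
        simp only [Function.comp_apply] at h; exact h ▸ (eT j).2)
  refine ⟨⟨_, hinj⟩, ?_⟩
  rintro (i | i) (j | j) hij
  · simp [Kss] at hij
  · exact hadj _ (eS i).2 _ (eT j).2
  · exact (hadj _ (eS j).2 _ (eT i).2).symm
  · simp [Kss] at hij

lemma hasCopy_kss_of_isNClique {T : Finset V} (hT : G.IsNClique (2 * s) T) :
    HasCopy G (Kss s) := by
  obtain ⟨S, hST, hS⟩ := exists_subset_card_eq (s := T) (n := s) (by rw [hT.card_eq]; omega)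
  refine hasCopy_kss_of_forall_adj (T := T \ S) hS ?_ disjoint_sdiff fun x hx y hy => ?_
  · rw [card_sdiff_of_subset hST, hT.card_eq, hS]; omega
  · exact hT.isClique (hST hx) (sdiff_subset hy) fun h => (mem_sdiff.1 hy).2 (h ▸ hx)

lemma hasInducedCopy_sum {β₁ β₂ : Type*} {H₁ : SimpleGraph β₁} {H₂ : SimpleGraph β₂}
    (f₁ : β₁ ↪ V) (f₂ : β₂ ↪ V) (h₁ : ∀ a b, G.Adj (f₁ a) (f₁ b) ↔ H₁.Adj a b)
    (h₂ : ∀ a b, G.Adj (f₂ a) (f₂ b) ↔ H₂.Adj a b) (hne : ∀ a b, f₁ a ≠ f₂ b)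
    (hnadj : ∀ a b, ¬ G.Adj (f₁ a) (f₂ b)) : HasInducedCopy G (H₁ ⊕g H₂) := by
  refine ⟨⟨Sum.elim f₁ f₂, f₁.injective.sumElim f₂.injective hne⟩, ?_⟩
  rintro (a | a) (b | b)
  · simpa using h₁ a b
  · simpa using hnadj a b
  · simpa using fun h => hnadj b a h.symm
  · simpa using h₂ a b

end Copies

section Ramsey

variable {V : Type*} (G : SimpleGraph V)

theorem exists_isNClique_or_isNIndepSet (a b : ℕ) {W : Finset V} (hW : 2 ^ (a + b) ≤ #W) :
    (∃ T ⊆ W, G.IsNClique a T) ∨ ∃ T ⊆ W, G.IsNIndepSet b T := by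
  obtain ⟨k, hk⟩ : ∃ k, a + b = k := ⟨_, rfl⟩
  induction k generalizing a b W with
  | zero => exact .inl ⟨∅, empty_subset _, by simp [isNClique_empty]; omega⟩
  | succ k ih =>
    obtain _ | a := a
    · exact .inl ⟨∅, empty_subset _, by simp [isNClique_empty]⟩
    obtain _ | b := b
    · exact .inr ⟨∅, empty_subset _, by simp [isNIndepSet_iff]⟩
    obtain ⟨v, hv⟩ : W.Nonempty := card_pos.1 (lt_of_lt_of_le (by positivity) hW)
    set N := {u ∈ W.erase v | G.Adj v u}
    set M := {u ∈ W.erase v | ¬ G.Adj v u}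
    have hNM : #N + #M + 1 = #W := by
      rw [card_filter_add_card_filter_not, card_erase_add_one hv]
    have hNW : N ⊆ W := (filter_subset _ _).trans (erase_subset _ _)
    have hMW : M ⊆ W := (filter_subset _ _).trans (erase_subset _ _)
    rw [hk, pow_succ] at hW
    by_cases hN : 2 ^ k ≤ #N
    · rcases ih a (b + 1) (by rwa [show a + (b + 1) = k by omega]) (by omega) with
        ⟨T, hTN, hT⟩ | ⟨T, hTN, hT⟩
      · refine .inl ⟨insert v T, insert_subset hv (hTN.trans hNW), hT.insert fun u hu => ?_⟩
        exact (mem_filter.1 (hTN hu)).2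
      · exact .inr ⟨T, hTN.trans hNW, hT⟩
    · rcases ih (a + 1) b (W := M) (by rw [show a + 1 + b = k by omega]; omega) (by omega) with
        ⟨T, hTM, hT⟩ | ⟨T, hTM, hT⟩
      · exact .inl ⟨T, hTM.trans hMW, hT⟩
      · refine .inr ⟨insert v T, insert_subset hv (hTM.trans hMW), ?_⟩
        rw [← isNClique_compl] at hT ⊢
        refine hT.insert fun u hu => ?_
        obtain ⟨hu, hvu⟩ := mem_filter.1 (hTM hu)
        exact (compl_adj G v u).2 ⟨(ne_of_mem_erase hu).symm, hvu⟩

lemma exists_isNIndepSet_of_not_hasCopy_kss {s m : ℕ} (hK : ¬ HasCopy G (Kss s))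
    {W : Finset V} (hW : 2 ^ (2 * s + m) ≤ #W) : ∃ T ⊆ W, G.IsNIndepSet m T :=
  (exists_isNClique_or_isNIndepSet G _ _ hW).resolve_left
    fun ⟨_, _, hT⟩ => hK (hasCopy_kss_of_isNClique hT)

end Ramsey

section KovariSosTuran

variable {V : Type*} {G : SimpleGraph V} {s : ℕ}

theorem card_le_of_not_hasCopy_kss (hK : ¬ HasCopy G (Kss s)) {W X : Finset V}
    (hWX : Disjoint W X) (hdeg : ∀ w ∈ W, s ≤ #{x ∈ X | G.Adj w x}) :
    #W ≤ (s - 1) * (#X).choose s := by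
  choose S hS hSc using fun w (hw : w ∈ W) => exists_subset_card_eq (hdeg w hw)
  set f : V → Finset V := fun w => if hw : w ∈ W then S w hw else ∅
  have hmaps : ∀ w ∈ W, f w ∈ X.powersetCard s := by
    intro w hw
    rw [mem_powersetCard, show f w = S w hw from dif_pos hw]
    exact ⟨(hS w hw).trans (filter_subset _ _), hSc w hw⟩
  rw [← card_powersetCard]
  refine card_le_mul_card_image_of_maps_to hmaps _ fun A hA => ?_
  by_contra! hfib
  obtain ⟨T, hTfib, hT⟩ := exists_subset_card_eq (show s ≤ #{w ∈ W | f w = A} by omega)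
  obtain ⟨hAX, hA⟩ := mem_powersetCard.1 hA
  have hTW : T ⊆ W := hTfib.trans (filter_subset _ _)
  refine hK (hasCopy_kss_of_forall_adj hA hT
    (disjoint_of_subset_left hAX (disjoint_of_subset_right hTW hWX.symm)) fun x hx y hy => ?_)
  obtain ⟨hyW, hyA⟩ := mem_filter.1 (hTfib hy)
  rw [show f y = S y hyW from dif_pos hyW] at hyA
  exact (mem_filter.1 (hS y hyW (hyA ▸ hx))).2.symm

end KovariSosTuran

section Edges

variable {V : Type*}

def restrictTo (G : SimpleGraph V) (W : Finset V) : SimpleGraph V where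
  Adj x y := G.Adj x y ∧ x ∈ W ∧ y ∈ W
  symm := ⟨fun _ _ h => ⟨h.1.symm, h.2.2, h.2.1⟩⟩
  loopless := ⟨fun x h => G.loopless.irrefl x h.1⟩

@[simp] lemma restrictTo_adj {G : SimpleGraph V} {W : Finset V} {x y : V} :
    (restrictTo G W).Adj x y ↔ G.Adj x y ∧ x ∈ W ∧ y ∈ W := Iff.rfl

lemma restrictTo_le (G : SimpleGraph V) (W : Finset V) : restrictTo G W ≤ G :=
  fun _ _ h => h.1

lemma restrictTo_univ [Fintype V] (G : SimpleGraph V) : restrictTo G univ = G := by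
  ext; simp

variable {n : ℕ}

lemma edgeCount_eq_card (G : SimpleGraph (Fin n)) : edgeCount G = #G.edgeFinset := by
  rw [edgeCount, Nat.card_eq_fintype_card, edgeFinset_card]

lemma edgeCount_restrictTo_le_add (G : SimpleGraph (Fin n)) (W D : Finset (Fin n)) :
    edgeCount (restrictTo G W) ≤ edgeCount (restrictTo G (W \ D)) + #D * n := by
  rw [edgeCount_eq_card, edgeCount_eq_card]
  have hsub : (restrictTo G W).edgeFinset ⊆
      (restrictTo G (W \ D)).edgeFinset ∪ D.biUnion (G.incidenceFinset ·) := by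
    refine fun e => Sym2.ind (fun u v he => ?_) e
    obtain ⟨huv, hu, hv⟩ : G.Adj u v ∧ u ∈ W ∧ v ∈ W := by simpa using he
    by_cases huD : u ∈ D
    · exact mem_union_right _ (mem_biUnion.2 ⟨u, huD, by simpa using huv⟩)
    by_cases hvD : v ∈ D
    · refine mem_union_right _ (mem_biUnion.2 ⟨v, hvD, ?_⟩)
      rw [Sym2.eq_swap]
      simpa using huv.symm
    · exact mem_union_left _ (by simp [huv, hu, hv, huD, hvD])
  calc #(restrictTo G W).edgeFinset
      ≤ #(restrictTo G (W \ D)).edgeFinset + #(D.biUnion (G.incidenceFinset ·)) :=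
        (card_le_card hsub).trans (card_union_le _ _)
    _ ≤ #(restrictTo G (W \ D)).edgeFinset + #D * n := by
        gcongr
        refine card_biUnion_le.trans (sum_le_card_nsmul _ _ _ fun x _ => ?_)
        simpa using (G.degree_lt_card_verts x).le

lemma edgeCount_restrictTo_le_card_mul (G : SimpleGraph (Fin n)) (W : Finset (Fin n)) :
    edgeCount (restrictTo G W) ≤ #W * n := by
  have hempty : edgeCount (restrictTo G ∅) = 0 := by
    rw [show restrictTo G ∅ = ⊥ by ext; simp]
    simp [edgeCount]
  simpa [hempty] using edgeCount_restrictTo_le_add G W W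

variable {β : Type*} {s : ℕ} {H : SimpleGraph β}

lemma le_exIndNum {G : SimpleGraph (Fin n)} (hK : ¬ HasCopy G (Kss s))
    (hH : ¬ HasInducedCopy G H) : edgeCount G ≤ exIndNum s n H := by
  refine le_csSup ⟨n.choose 2, ?_⟩ ⟨G, hK, hH, rfl⟩
  rintro _ ⟨G', -, -, rfl⟩
  simpa [edgeCount_eq_card] using G'.card_edgeFinset_le_card_choose_two

lemma exIndNum_le {m : ℕ} (h : ∀ G : SimpleGraph (Fin n), ¬ HasCopy G (Kss s) →
    ¬ HasInducedCopy G H → edgeCount G ≤ m) : exIndNum s n H ≤ m :=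
  csSup_le' fun _ ⟨G, hK, hH, hm⟩ => hm ▸ h G hK hH

end Edges

def HasInducedCopyIn {V β : Type*} (G : SimpleGraph V) (H : SimpleGraph β) (W : Finset V) :
    Prop :=
  ∃ f : β ↪ V, (∀ a, f a ∈ W) ∧ ∀ a b, G.Adj (f a) (f b) ↔ H.Adj a b

def dominationBound (s a : ℕ) : ℕ := a + 2 ^ (2 * s + a)

def peelingBound (s a : ℕ) : ℕ :=
  s * dominationBound s a + (s - 1) * (s * dominationBound s a).choose s

section Peeling

variable {V β : Type*} [Fintype β] {G : SimpleGraph V} {H : SimpleGraph β} {s : ℕ}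

/-- The vertices of the copy that `restrictTo` pushes outside `W` are isolated in `H`, so they can
be moved onto `T`. -/
lemma hasInducedCopyIn_of_isNIndepSet {W T : Finset V} {f : β ↪ V}
    (hf : ∀ a b, (restrictTo G W).Adj (f a) (f b) ↔ H.Adj a b)
    (hT : G.IsNIndepSet (Fintype.card β) T) (hTW : T ⊆ W)
    (hTf : ∀ t ∈ T, ∀ b, f b ∈ W → t ≠ f b ∧ ¬ G.Adj t (f b)) : HasInducedCopyIn G H W := by
  obtain ⟨e⟩ : Nonempty ({b // f b ∉ W} ↪ T) :=
    Function.Embedding.nonempty_of_card_le (by simp [hT.card_eq])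
  set g : β → V := fun b => if h : f b ∈ W then f b else e ⟨b, h⟩
  have hg_in : ∀ b, f b ∈ W → g b = f b := fun b h => dif_pos h
  have hg_out : ∀ b (h : f b ∉ W), g b = e ⟨b, h⟩ := fun b h => dif_neg h
  have hgT : ∀ b, f b ∉ W → g b ∈ T := fun b h => hg_out b h ▸ (e _).2
  have hnadj : ∀ b c, f b ∉ W → ¬ G.Adj (g b) (g c) := by
    intro b c hb hbc
    by_cases hc : f c ∈ W
    · exact (hTf _ (hgT b hb) c hc).2 (hg_in c hc ▸ hbc)
    · exact hT.isIndepSet (hgT b hb) (hgT c hc) hbc.ne hbc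
  have hHnadj : ∀ b c, f b ∉ W → ¬ H.Adj b c := fun b c hb h => hb ((hf b c).2 h).2.1
  have hne : ∀ b c, f b ∈ W → f c ∉ W → g b ≠ g c := fun b c hb hc h =>
    (hTf _ (hgT c hc) b hb).1 (h ▸ hg_in b hb)
  have hginj : Function.Injective g := by
    intro b c hbc
    by_cases hb : f b ∈ W <;> by_cases hc : f c ∈ W
    · exact f.injective (by rwa [hg_in b hb, hg_in c hc] at hbc)
    · exact absurd hbc (hne b c hb hc)
    · exact absurd hbc.symm (hne c b hc hb)
    · rw [hg_out b hb, hg_out c hc] at hbc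
      exact congrArg Subtype.val (e.injective (Subtype.ext hbc))
  refine ⟨⟨g, hginj⟩, fun b => ?_, fun b c => ?_⟩
  · by_cases hb : f b ∈ W
    · change g b ∈ W
      rwa [hg_in b hb]
    · exact hTW (hgT b hb)
  · change G.Adj (g b) (g c) ↔ H.Adj b c
    by_cases hb : f b ∈ W
    · by_cases hc : f c ∈ W
      · rw [hg_in b hb, hg_in c hc, ← hf]
        simp [hb, hc]
      · exact iff_of_false (fun h => hnadj c b hc h.symm) fun h => hHnadj c b hc h.symm
    · exact iff_of_false (hnadj b c hb) (hHnadj b c hb)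

lemma exists_dominating_subset [DecidableEq V] (hK : ¬ HasCopy G (Kss s)) {W : Finset V}
    (hcopy : HasInducedCopy (restrictTo G W) H) (hno : ¬ HasInducedCopyIn G H W) :
    ∃ D ⊆ W, #D ≤ dominationBound s (Fintype.card β) ∧ ∀ v ∈ W \ D, ∃ y ∈ D, G.Adj v y := by
  obtain ⟨f, hf⟩ := hcopy
  set Y := {v ∈ univ.map f | v ∈ W}
  set Z := {v ∈ W | ∀ b, f b ∈ W → v ≠ f b ∧ ¬ G.Adj v (f b)}
  have hY : #Y ≤ Fintype.card β := (card_filter_le _ _).trans (by simp)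
  have hZ : #Z < 2 ^ (2 * s + Fintype.card β) := by
    by_contra! hZ
    obtain ⟨T, hTZ, hT⟩ := exists_isNIndepSet_of_not_hasCopy_kss G hK hZ
    exact hno (hasInducedCopyIn_of_isNIndepSet hf hT (hTZ.trans (filter_subset _ _))
      fun t ht => (mem_filter.1 (hTZ ht)).2)
  refine ⟨Y ∪ Z, union_subset (fun y hy => (mem_filter.1 hy).2) (filter_subset _ _),
    (card_union_le _ _).trans (by unfold dominationBound; omega), fun v hv => ?_⟩
  obtain ⟨hvW, hvD⟩ := mem_sdiff.1 hv
  obtain ⟨b, hbW, hvb⟩ : ∃ b, f b ∈ W ∧ (v = f b ∨ G.Adj v (f b)) := by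
    by_contra! h
    exact hvD (mem_union_right _ (mem_filter.2 ⟨hvW, fun b hb => h b hb⟩))
  have hbY : f b ∈ Y := mem_filter.2 ⟨mem_map_of_mem _ (mem_univ b), hbW⟩
  rcases hvb with rfl | hadj
  · exact absurd (mem_union_left _ hbY) hvD
  · exact ⟨f b, mem_union_left _ hbY, hadj⟩

variable {n : ℕ} {G : SimpleGraph (Fin n)}

/-- `k` domination rounds remain: each round adds one neighbour in `X` to every surviving vertex
and at most `dominationBound` vertices to `X`. -/
lemma edgeCount_restrictTo_le_of_le_card_adj (hK : ¬ HasCopy G (Kss s)) (k : ℕ)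
    {W X : Finset (Fin n)} (hWX : Disjoint W X)
    (hdeg : ∀ v ∈ W, s ≤ #{x ∈ X | G.Adj v x} + k)
    (hX : #X + k * dominationBound s (Fintype.card β) ≤ s * dominationBound s (Fintype.card β))
    (hno : ¬ HasInducedCopyIn G H W) :
    edgeCount (restrictTo G W) ≤ exIndNum s n H + (k * dominationBound s (Fintype.card β) +
      (s - 1) * (s * dominationBound s (Fintype.card β)).choose s) * n := by
  set d := dominationBound s (Fintype.card β)
  induction k generalizing W X with
  | zero =>
    have hW : #W ≤ (s - 1) * (s * d).choose s :=
      (card_le_of_not_hasCopy_kss hK hWX (by simpa using hdeg)).trans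
        (Nat.mul_le_mul_left _ (Nat.choose_le_choose _ (by simpa using hX)))
    calc edgeCount (restrictTo G W) ≤ #W * n := edgeCount_restrictTo_le_card_mul G W
      _ ≤ _ := by
        rw [zero_mul, zero_add]
        exact le_add_left (Nat.mul_le_mul_right _ hW)
  | succ k ih =>
    by_cases hcopy : HasInducedCopy (restrictTo G W) H
    swap
    · exact (le_exIndNum (fun h => hK (h.mono (restrictTo_le G W))) hcopy).trans
        (Nat.le_add_right _ _)
    obtain ⟨D, hDW, hD, hdom⟩ := exists_dominating_subset hK hcopy hno
    have hXD : Disjoint X D := disjoint_of_subset_right hDW hWX.symm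
    have hdeg' : ∀ v ∈ W \ D, s ≤ #{x ∈ X ∪ D | G.Adj v x} + k := by
      intro v hv
      obtain ⟨y, hyD, hvy⟩ := hdom v hv
      have hD1 : 1 ≤ #{x ∈ D | G.Adj v x} := card_pos.2 ⟨y, mem_filter.2 ⟨hyD, hvy⟩⟩
      rw [filter_union, card_union_of_disjoint (disjoint_filter_filter hXD)]
      have := hdeg v (sdiff_subset hv)
      omega
    have hWX' : Disjoint (W \ D) (X ∪ D) :=
      disjoint_union_right.2 ⟨disjoint_of_subset_left sdiff_subset hWX, sdiff_disjoint⟩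
    have hX' : #(X ∪ D) + k * d ≤ s * d := by
      have := card_union_le X D
      rw [add_mul, one_mul] at hX
      omega
    have hno' : ¬ HasInducedCopyIn G H (W \ D) := fun ⟨f, hfW, hf⟩ =>
      hno ⟨f, fun a => sdiff_subset (hfW a), hf⟩
    calc edgeCount (restrictTo G W) ≤ edgeCount (restrictTo G (W \ D)) + #D * n :=
          edgeCount_restrictTo_le_add G W D
      _ ≤ exIndNum s n H + (k * d + (s - 1) * (s * d).choose s) * n + d * n := by
          gcongr
          exact ih hWX' hdeg' hno' hX'
      _ = _ := by ring

lemma edgeCount_restrictTo_le_exIndNum (hK : ¬ HasCopy G (Kss s)) {W : Finset (Fin n)}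
    (hno : ¬ HasInducedCopyIn G H W) :
    edgeCount (restrictTo G W) ≤ exIndNum s n H + peelingBound s (Fintype.card β) * n := by
  simpa [peelingBound] using
    edgeCount_restrictTo_le_of_le_card_adj hK s (disjoint_empty_right W) (by simp) (by simp) hno

end Peeling

def IsInducedCopyImage {V β : Type*} [Fintype β] (G : SimpleGraph V) (H : SimpleGraph β)
    (A : Finset V) : Prop :=
  ∃ f : β ↪ V, (∀ a b, G.Adj (f a) (f b) ↔ H.Adj a b) ∧ univ.map f = A

def IsInducedPacking {V β : Type*} [Fintype β] (G : SimpleGraph V) (H : SimpleGraph β)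
    (F : Finset (Finset V)) : Prop :=
  (∀ A ∈ F, IsInducedCopyImage G H A) ∧ (F : Set (Finset V)).PairwiseDisjoint id

section Packing

variable {V β : Type*} [Fintype β] {G : SimpleGraph V} {H : SimpleGraph β}

lemma IsInducedCopyImage.card {A : Finset V} (h : IsInducedCopyImage G H A) :
    #A = Fintype.card β := by
  obtain ⟨f, -, rfl⟩ := h
  simp

lemma IsInducedPacking.subset {F F' : Finset (Finset V)} (hF : IsInducedPacking G H F)
    (h : F' ⊆ F) : IsInducedPacking G H F' :=
  ⟨fun A hA => hF.1 A (h hA), hF.2.subset (coe_subset.2 h)⟩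

lemma IsInducedPacking.card_biUnion [DecidableEq V] {F : Finset (Finset V)}
    (hF : IsInducedPacking G H F) : #(F.biUnion id) = #F * Fintype.card β :=
  (Finset.card_biUnion hF.2).trans (sum_const_nat fun A hA => (hF.1 A hA).card)

lemma exists_hitting_set [Fintype V] [DecidableEq V] [Nonempty β] {q : ℕ}
    (hq : ∀ F, IsInducedPacking G H F → #F < q) :
    ∃ U : Finset V, #U ≤ q * Fintype.card β ∧ ¬ HasInducedCopyIn G H Uᶜ := by
  obtain ⟨F, hF, hmax⟩ := exists_max_image {F : Finset (Finset V) | IsInducedPacking G H F} card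
    ⟨∅, mem_filter.2 ⟨mem_univ _, by simp, by simp⟩⟩
  replace hF := (mem_filter.1 hF).2
  refine ⟨F.biUnion id, by rw [hF.card_biUnion]; gcongr; exact (hq F hF).le, ?_⟩
  rintro ⟨f, hfU, hf⟩
  have hAU : Disjoint (univ.map f) (F.biUnion id) := disjoint_left.2 fun x hx => by
    obtain ⟨a, -, rfl⟩ := mem_map.1 hx
    exact mem_compl.1 (hfU a)
  have hAF : univ.map f ∉ F := fun hA => by
    obtain ⟨b⟩ := ‹Nonempty β›
    have hb := mem_map_of_mem f (mem_univ b)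
    exact disjoint_left.1 hAU hb (subset_biUnion_of_mem id hA hb)
  have hins : IsInducedPacking G H (insert (univ.map f) F) := by
    refine ⟨forall_mem_insert _ _ _ |>.2 ⟨⟨f, hf, rfl⟩, hF.1⟩, ?_⟩
    rw [coe_insert]
    exact hF.2.insert fun B hB _ => disjoint_of_subset_right (subset_biUnion_of_mem id hB) hAU
  have := hmax _ (mem_filter.2 ⟨mem_univ _, hins⟩)
  rw [card_insert_of_notMem hAF] at this
  omega

lemma card_filter_not_disjoint_le [DecidableEq V] {F : Finset (Finset V)}
    (hF : (F : Set (Finset V)).PairwiseDisjoint id) (U : Finset V) :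
    #{A ∈ F | ¬ Disjoint A U} ≤ #U := by
  calc #{A ∈ F | ¬ Disjoint A U} ≤ #({A ∈ F | ¬ Disjoint A U}.biUnion (· ∩ U)) :=
        card_le_card_biUnion ((hF.subset (coe_subset.2 (filter_subset _ _))).mono
          fun _ => inter_subset_left)
          fun A hA => not_disjoint_iff_nonempty_inter.1 (mem_filter.1 hA).2
    _ ≤ #U := card_le_card (biUnion_subset.2 fun _ _ => inter_subset_right)

lemma exists_adj_of_not_hasInducedCopy_sum {β' : Type*} [Fintype β'] {H' : SimpleGraph β'}
    (hind : ¬ HasInducedCopy G (H ⊕g H')) {A B : Finset V} (hA : IsInducedCopyImage G H A)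
    (hB : IsInducedCopyImage G H' B) (hAB : Disjoint A B) : ∃ x ∈ A, ∃ y ∈ B, G.Adj x y := by
  obtain ⟨f, hf, rfl⟩ := hA
  obtain ⟨f', hf', rfl⟩ := hB
  by_contra! h
  have hmem : ∀ a, f a ∈ univ.map f := fun a => mem_map_of_mem f (mem_univ a)
  have hmem' : ∀ b, f' b ∈ univ.map f' := fun b => mem_map_of_mem f' (mem_univ b)
  exact hind (hasInducedCopy_sum f f' hf hf'
    (fun a b hab => disjoint_left.1 hAB (hmem a) (hab ▸ hmem' b))
    fun a b => h _ (hmem a) _ (hmem' b))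

lemma exists_le_card_adj_biUnion [DecidableEq V] {s : ℕ} {F : Finset (Finset V)}
    (hF : (F : Set (Finset V)).PairwiseDisjoint id) {B : Finset V}
    (hadj : ∀ A ∈ F, ∃ x ∈ A, ∃ y ∈ B, G.Adj x y) (hcard : #B * (s - 1) < #F) :
    ∃ y ∈ B, s ≤ #{x ∈ F.biUnion id | G.Adj y x} := by
  have : Nonempty V := by
    obtain ⟨A, hA⟩ := card_pos.1 (by omega : 0 < #F)
    obtain ⟨x, -⟩ := hadj A hA
    exact ⟨x⟩
  choose! x hx y hy hxy using hadj
  obtain ⟨v, hvB, hv⟩ := exists_lt_card_fiber_of_mul_lt_card_of_maps_to hy hcard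
  refine ⟨v, hvB, ?_⟩
  calc s ≤ #{A ∈ F | y A = v} := by omega
    _ = #({A ∈ F | y A = v}.image x) := by
        refine (card_image_of_injOn fun A hA A' hA' h => ?_).symm
        obtain ⟨hAF, -⟩ := mem_filter.1 hA
        obtain ⟨hA'F, -⟩ := mem_filter.1 hA'
        exact hF.elim_finset hAF hA'F _ (hx A hAF) (h ▸ hx A' hA'F)
    _ ≤ #{x ∈ F.biUnion id | G.Adj v x} := by
        refine card_le_card fun u hu => ?_
        obtain ⟨A, hA, rfl⟩ := mem_image.1 hu
        obtain ⟨hAF, rfl⟩ := mem_filter.1 hA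
        exact mem_filter.2 ⟨mem_biUnion.2 ⟨A, hAF, hx A hAF⟩, (hxy A hAF).symm⟩

end Packing

/-- With `crossPackingSize s b` copies of `H₁` beside a copy of `H₂`, pigeonhole gives a vertex of
the latter with `s` neighbours among them; `rightPackingBound` copies of `H₂` then exceed the
Kővári–Sós–Turán bound against the union of the `H₁`-copies. -/
def crossPackingSize (s b : ℕ) : ℕ := b * (s - 1) + 1

def rightPackingBound (s a b : ℕ) : ℕ := (s - 1) * (crossPackingSize s b * a).choose s + 1

def leftPackingBound (s a b : ℕ) : ℕ := crossPackingSize s b + rightPackingBound s a b * b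

def disjointUnionBound (s a b : ℕ) : ℕ :=
  (leftPackingBound s a b * a + peelingBound s a) +
    (rightPackingBound s a b * b + peelingBound s b)

section DisjointUnion

variable {V β₁ β₂ : Type*} [Fintype β₁] [Fintype β₂] {H₁ : SimpleGraph β₁} {H₂ : SimpleGraph β₂}
  {s : ℕ}

lemma card_lt_leftPackingBound [DecidableEq V] {G : SimpleGraph V} (hK : ¬ HasCopy G (Kss s))
    (hind : ¬ HasInducedCopy G (H₁ ⊕g H₂)) {FA FB : Finset (Finset V)}
    (hFA : IsInducedPacking G H₁ FA) (hFB : IsInducedPacking G H₂ FB)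
    (hFB_card : rightPackingBound s (Fintype.card β₁) (Fintype.card β₂) ≤ #FB) :
    #FA < leftPackingBound s (Fintype.card β₁) (Fintype.card β₂) := by
  set a := Fintype.card β₁
  set b := Fintype.card β₂
  by_contra! hFA_card
  obtain ⟨FB', hFB'FB, hFB'⟩ := exists_subset_card_eq hFB_card
  replace hFB := hFB.subset hFB'FB
  set UB := FB'.biUnion id
  have hUB : #UB = rightPackingBound s a b * b := by rw [hFB.card_biUnion, hFB']
  have hgood : crossPackingSize s b ≤ #{A ∈ FA | Disjoint A UB} := by
    have := card_filter_add_card_filter_not (s := FA) (p := fun A => Disjoint A UB)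
    have := card_filter_not_disjoint_le hFA.2 UB
    unfold leftPackingBound at hFA_card
    omega
  obtain ⟨FA', hFA'sub, hFA'⟩ := exists_subset_card_eq hgood
  replace hFA := hFA.subset (hFA'sub.trans (filter_subset _ _))
  set X := FA'.biUnion id
  have hX : #X = crossPackingSize s b * a := by rw [hFA.card_biUnion, hFA']
  have hdisj : ∀ A ∈ FA', ∀ B ∈ FB', Disjoint A B := fun A hA B hB =>
    disjoint_of_subset_right (subset_biUnion_of_mem id hB) (mem_filter.1 (hFA'sub hA)).2
  have hy : ∀ B ∈ FB', ∃ y ∈ B, s ≤ #{x ∈ X | G.Adj y x} := fun B hB =>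
    exists_le_card_adj_biUnion hFA.2
      (fun A hA => exists_adj_of_not_hasInducedCopy_sum hind (hFA.1 A hA) (hFB.1 B hB)
        (hdisj A hA B hB))
      (by
        rw [(hFB.1 B hB).card, hFA']
        change b * (s - 1) < b * (s - 1) + 1
        omega)
  have : Nonempty V := by
    obtain ⟨B, hB⟩ := card_pos.1 (by unfold rightPackingBound at hFB'; omega : 0 < #FB')
    obtain ⟨y, -⟩ := hy B hB
    exact ⟨y⟩
  choose! y hyB hyX using hy
  have hY : #(FB'.image y) = #FB' := card_image_of_injOn fun B hB B' hB' h =>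
    hFB.2.elim_finset hB hB' _ (hyB B hB) (h ▸ hyB B' hB')
  have hYX : Disjoint (FB'.image y) X := disjoint_left.2 fun v hv hvX => by
    obtain ⟨B, hB, rfl⟩ := mem_image.1 hv
    obtain ⟨A, hA, hvA⟩ := mem_biUnion.1 hvX
    exact disjoint_left.1 (hdisj A hA B hB) hvA (hyB B hB)
  have := card_le_of_not_hasCopy_kss hK hYX (forall_mem_image.2 hyX)
  rw [hY, hFB', hX] at this
  unfold rightPackingBound at this
  omega

variable {n : ℕ} {G : SimpleGraph (Fin n)}

lemma edgeCount_le_of_forall_isInducedPacking_card_lt {β : Type*} [Fintype β] [Nonempty β]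
    {H : SimpleGraph β} (hK : ¬ HasCopy G (Kss s)) {q : ℕ}
    (hq : ∀ F, IsInducedPacking G H F → #F < q) :
    edgeCount G ≤ exIndNum s n H + (q * Fintype.card β + peelingBound s (Fintype.card β)) * n := by
  obtain ⟨U, hU, hno⟩ := exists_hitting_set hq
  calc edgeCount G = edgeCount (restrictTo G univ) := by rw [restrictTo_univ]
    _ ≤ edgeCount (restrictTo G Uᶜ) + #U * n := by
        rw [compl_eq_univ_sdiff]
        exact edgeCount_restrictTo_le_add G univ U
    _ ≤ exIndNum s n H + peelingBound s (Fintype.card β) * n + q * Fintype.card β * n := by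
        gcongr
        exact edgeCount_restrictTo_le_exIndNum hK hno
    _ = _ := by ring

lemma edgeCount_le_of_not_hasInducedCopy_sum (hK : ¬ HasCopy G (Kss s))
    (hind : ¬ HasInducedCopy G (H₁ ⊕g H₂)) :
    edgeCount G ≤ exIndNum s n H₁ + exIndNum s n H₂ +
      disjointUnionBound s (Fintype.card β₁) (Fintype.card β₂) * n := by
  rcases isEmpty_or_nonempty β₁ with hβ₁ | hβ₁
  · have hH₂ : ¬ HasInducedCopy G H₂ := fun ⟨f, hf⟩ => hind (hasInducedCopy_sum
      .ofIsEmpty f isEmptyElim hf isEmptyElim isEmptyElim)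
    have := le_exIndNum hK hH₂
    omega
  rcases isEmpty_or_nonempty β₂ with hβ₂ | hβ₂
  · have hH₁ : ¬ HasInducedCopy G H₁ := fun ⟨f, hf⟩ => hind (hasInducedCopy_sum
      f .ofIsEmpty hf isEmptyElim (fun _ b => isEmptyElim b) fun _ b => isEmptyElim b)
    have := le_exIndNum hK hH₁
    omega
  rw [disjointUnionBound, add_mul]
  by_cases hleft : ∃ F, IsInducedPacking G H₁ F ∧
      leftPackingBound s (Fintype.card β₁) (Fintype.card β₂) ≤ #F
  · obtain ⟨FA, hFA, hFA_card⟩ := hleft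
    have := edgeCount_le_of_forall_isInducedPacking_card_lt hK fun FB hFB =>
      lt_of_not_ge fun hFB_card =>
        (card_lt_leftPackingBound hK hind hFA hFB hFB_card).not_ge hFA_card
    omega
  · push Not at hleft
    have := edgeCount_le_of_forall_isInducedPacking_card_lt hK hleft
    omega

end DisjointUnion

theorem stmt2 {β₁ β₂ : Type*} [Fintype β₁] [Fintype β₂] (s : ℕ)
    (H₁ : SimpleGraph β₁) (H₂ : SimpleGraph β₂) :
    ∃ C : ℕ, ∀ n : ℕ,
      exIndNum s n (H₁ ⊕g H₂) ≤ C * (exIndNum s n H₁ + exIndNum s n H₂ + n) := by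
  refine ⟨disjointUnionBound s (Fintype.card β₁) (Fintype.card β₂) + 1, fun n =>
    exIndNum_le fun G hK hind => ?_⟩
  have := edgeCount_le_of_not_hasInducedCopy_sum hK hind
  nlinarith
end

section
/- For every ε > 0, every s ∈ ℕ, every K_{s,s}-free graph G, and every vertex subset S ⊆ V(G) with |S| ≥ 2s/ε, there are at most (2s/ε)^s vertices v ∈ V(G) satisfying |N(v) ∩ S| ≥ ε|S|. -/
open SimpleGraph

open Finset

lemma kss_of_sets {V : Type*} [DecidableEq V] (G : SimpleGraph V) (s : ℕ)
    (A T : Finset V) (hA : A.card = s) (hT : T.card = s) (hd : Disjoint A T)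
    (hadj : ∀ v ∈ A, ∀ u ∈ T, G.Adj v u) : HasCopy G (Kss s) := by
  have eA : Fin s ≃ ↥A := (Fintype.equivFinOfCardEq (by rwa [Fintype.card_coe])).symm
  have eT : Fin s ≃ ↥T := (Fintype.equivFinOfCardEq (by rwa [Fintype.card_coe])).symm
  refine ⟨⟨Sum.elim (fun i => (eA i : V)) (fun j => (eT j : V)), ?_⟩, ?_⟩
  · rintro (i | i) (j | j) h <;> simp only [Sum.elim_inl, Sum.elim_inr] at h
    · simpa using eA.injective (Subtype.ext h)
    · exact absurd ((eT j).2) (by rw [← h]; exact Finset.disjoint_left.mp hd (eA i).2)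
    · exact absurd ((eA j).2) (by rw [← h]; exact Finset.disjoint_right.mp hd (eT i).2)
    · simpa using eT.injective (Subtype.ext h)
  · rintro (i | i) (j | j) h <;> simp [Kss, completeBipartiteGraph] at h ⊢
    · exact hadj _ (eA i).2 _ (eT j).2
    · exact (hadj _ (eA j).2 _ (eT i).2).symm


open Finset in
theorem stmt4 {V : Type*} [Fintype V] [DecidableEq V] (ε : ℝ) (hε : 0 < ε) (s : ℕ)
    (G : SimpleGraph V) [DecidableRel G.Adj] (hKss : ¬ HasCopy G (Kss s))
    (S : Finset V) (hS : 2 * s / ε ≤ (S.card : ℝ)) :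
    ((Finset.univ.filter fun v : V =>
        ε * S.card ≤ ((S.filter fun u => G.Adj v u).card : ℝ)).card : ℝ)
      ≤ (2 * s / ε) ^ s := by
  classical
  -- s = 0 is contradictory
  rcases Nat.eq_zero_or_pos s with hs0 | hs
  · subst hs0
    exact absurd ⟨⟨fun x => x.elim Fin.elim0 Fin.elim0, fun x => x.elim Fin.elim0 Fin.elim0⟩,
      fun a => a.elim Fin.elim0 Fin.elim0⟩ hKss
  set n := S.card with hn
  set D : V → Finset V := fun v => S.filter fun u => G.Adj v u with hD
  set L := Finset.univ.filter fun v : V => ε * n ≤ ((D v).card : ℝ) with hL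
  rcases L.eq_empty_or_nonempty with hLe | ⟨v₀, hv₀⟩
  · rw [hLe]; simp; positivity
  have hεn2s : (2 * s : ℝ) ≤ ε * n := by
    rw [div_le_iff₀ hε] at hS; linarith [hS]
  set m := ⌈ε * n⌉₊ with hm
  have hεnm : (ε * n : ℝ) ≤ m := Nat.le_ceil _
  have hm2s : 2 * s ≤ m := by
    have : ((2 * s : ℕ) : ℝ) ≤ (m : ℝ) := by push_cast; linarith
    exact_mod_cast this
  have hsm : s ≤ m := le_trans (by omega) hm2s
  have hdeg : ∀ v ∈ L, m ≤ (D v).card := by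
    intro v hv
    rw [hL, mem_filter] at hv
    exact Nat.ceil_le.mpr hv.2
  have hmn : m ≤ n := by
    have h1 : (D v₀).card ≤ n := card_le_card (filter_subset _ _)
    exact le_trans (hdeg v₀ hv₀) h1
  -- Step A: every s-subset of S has at most s-1 common neighbors in L
  have stepA : ∀ T ∈ S.powersetCard s, (L.filter fun v => T ⊆ D v).card ≤ s - 1 := by
    intro T hT
    by_contra hc
    push_neg at hc
    have hsc : s ≤ (L.filter fun v => T ⊆ D v).card := by omega
    obtain ⟨A, hA, hAcard⟩ := Finset.exists_subset_card_eq hsc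
    rw [mem_powersetCard] at hT
    have hadj : ∀ v ∈ A, ∀ u ∈ T, G.Adj v u := by
      intro v hv u hu
      have := (mem_filter.mp (hA hv)).2 hu
      exact (mem_filter.mp this).2
    have hd : Disjoint A T := by
      rw [Finset.disjoint_left]
      intro a ha hat
      exact G.irrefl (hadj a ha a hat)
    exact hKss (kss_of_sets G s A T hAcard hT.2 hd hadj)
  -- Step B: double counting
  have key : L.card * m.choose s ≤ (s - 1) * n.choose s := by
    calc L.card * m.choose s = ∑ _v ∈ L, m.choose s := by rw [sum_const, smul_eq_mul]
      _ ≤ ∑ v ∈ L, ((D v).card).choose s := sum_le_sum fun v hv =>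
          Nat.choose_le_choose s (hdeg v hv)
      _ = ∑ v ∈ L, ((D v).powersetCard s).card := by simp [card_powersetCard]
      _ = ∑ v ∈ L, ((S.powersetCard s).filter fun T => T ⊆ D v).card := by
          refine sum_congr rfl fun v _ => ?_
          congr 1
          ext T
          simp only [mem_powersetCard, mem_filter]
          have hsub : D v ⊆ S := filter_subset _ _
          constructor
          · exact fun ⟨h1, h2⟩ => ⟨⟨h1.trans hsub, h2⟩, h1⟩
          · exact fun ⟨⟨_, h2⟩, h3⟩ => ⟨h3, h2⟩
      _ = ∑ T ∈ S.powersetCard s, (L.filter fun v => T ⊆ D v).card := by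
          simp_rw [card_filter]; exact sum_comm
      _ ≤ ∑ _T ∈ S.powersetCard s, (s - 1) := sum_le_sum stepA
      _ = (s - 1) * n.choose s := by rw [sum_const, smul_eq_mul, card_powersetCard, mul_comm]
  -- Step C: (n choose s) ≤ (2/ε)^s * (m choose s)
  have stepC : (n.choose s : ℝ) ≤ (2 / ε) ^ s * m.choose s := by
    have hprod : ∏ i ∈ range s, ((n - i : ℕ) : ℝ) ≤
        (2 / ε) ^ s * ∏ i ∈ range s, ((m - i : ℕ) : ℝ) := by
      calc ∏ i ∈ range s, ((n - i : ℕ) : ℝ)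
          ≤ ∏ i ∈ range s, (2 / ε) * ((m - i : ℕ) : ℝ) := by
            refine prod_le_prod (fun i _ => by positivity) (fun i hi => ?_)
            have hi' : i < s := mem_range.mp hi
            have hin : ((n - i : ℕ) : ℝ) ≤ (n : ℝ) := Nat.cast_le.mpr (Nat.sub_le n i)
            have him : ((m - i : ℕ) : ℝ) = (m : ℝ) - i :=
              Nat.cast_sub (hi'.le.trans hsm)
            have h1 : ((2 * s : ℕ) : ℝ) ≤ m := Nat.cast_le.mpr hm2s
            have h2 : (i : ℝ) < s := by exact_mod_cast hi'
            push_cast at h1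
            have hge : ε * n / 2 ≤ (m : ℝ) - i := by linarith
            have hfin : (n : ℝ) ≤ 2 / ε * ((m : ℝ) - i) := by
              rw [div_mul_eq_mul_div, le_div_iff₀ hε]
              linarith
            rw [him]
            linarith
        _ = (2 / ε) ^ s * ∏ i ∈ range s, ((m - i : ℕ) : ℝ) := by
            rw [prod_mul_distrib, prod_const, card_range]
    have hnd : ((n.descFactorial s : ℕ) : ℝ) = ∏ i ∈ range s, ((n - i : ℕ) : ℝ) := by
      rw [Nat.descFactorial_eq_prod_range, Nat.cast_prod]
    have hmd : ((m.descFactorial s : ℕ) : ℝ) = ∏ i ∈ range s, ((m - i : ℕ) : ℝ) := by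
      rw [Nat.descFactorial_eq_prod_range, Nat.cast_prod]
    have hfac : ((n.descFactorial s : ℕ) : ℝ) ≤ (2 / ε) ^ s * ((m.descFactorial s : ℕ) : ℝ) := by
      rw [hnd, hmd]; exact hprod
    have hcast : ∀ k : ℕ, ((k.descFactorial s : ℕ) : ℝ) = (s.factorial : ℝ) * k.choose s := by
      intro k
      exact_mod_cast congrArg (Nat.cast : ℕ → ℝ) (Nat.descFactorial_eq_factorial_mul_choose k s)
    rw [hcast, hcast, mul_left_comm] at hfac
    have hfpos : (0 : ℝ) < s.factorial := by exact_mod_cast s.factorial_pos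
    exact le_of_mul_le_mul_left hfac hfpos
  -- finish
  have hCpos : (0 : ℝ) < m.choose s := by exact_mod_cast Nat.choose_pos hsm
  have keyR : (L.card : ℝ) * m.choose s ≤ ((s - 1 : ℕ) : ℝ) * n.choose s := by
    exact_mod_cast key
  have h2 : ((s - 1 : ℕ) : ℝ) * (n.choose s : ℝ) ≤
      (((s - 1 : ℕ) : ℝ) * (2 / ε) ^ s) * m.choose s := by
    rw [mul_assoc]
    exact mul_le_mul_of_nonneg_left stepC (by positivity)
  have h3 : (L.card : ℝ) ≤ ((s - 1 : ℕ) : ℝ) * (2 / ε) ^ s :=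
    le_of_mul_le_mul_right (keyR.trans h2) hCpos
  have h4 : ((s - 1 : ℕ) : ℝ) ≤ (s : ℝ) ^ s := by
    have : ((s - 1 : ℕ) : ℝ) ≤ (s : ℝ) := by
      have : (s - 1 : ℕ) ≤ s := Nat.sub_le s 1
      exact_mod_cast this
    refine this.trans (le_self_pow₀ ?_ ?_)
    · exact_mod_cast hs
    · omega
  calc (L.card : ℝ) ≤ ((s - 1 : ℕ) : ℝ) * (2 / ε) ^ s := h3
    _ ≤ (s : ℝ) ^ s * (2 / ε) ^ s := by
        exact mul_le_mul_of_nonneg_right h4 (by positivity)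
    _ = (2 * s / ε) ^ s := by rw [← mul_pow]; ring_nf
end
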